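/- arXiv:2106.10533 — 4 statements merged into one kernel-verified Lean document; each statement's English description precedes it below -/
import Mathlib

section
/- Let f₁, …, fₙ, g_{1,1}, …, g_{d,n} : ℝⁿ → ℝ be the components of the unknown vector field of the dynamics ẋ = f(x) + Σ_{p=1}^{d} g_p(x)·u[αᵖ], each Lipschitz with respect to the weighted norm ‖·‖_w with respective constants f̄ₖ and ḡ_{p,k}. Suppose for data points x¹, …, x^{j−1} one has interval enclosures fₖ(xⁱ) ∈ [aᵢₖ, bᵢₖ] and g_{p,k}(xⁱ) ∈ [cᵢₚₖ, dᵢₚₖ]. Then for every state x ∈ ℝⁿ and every control u ∈ ℝᵐ, the derivative satisfies componentwise: fₖ(x) + Σ_{p=1}^{d} g_{p,k}(x)·u[αᵖ] ∈ (⋂ᵢ [aᵢₖ − f̄ₖ‖x − xⁱ‖_w, bᵢₖ + f̄ₖ‖x − xⁱ‖_w]) + Σ_{p=1}^{d} u[αᵖ]·(⋂ᵢ [cᵢₚₖ − ḡ_{p,k}‖x − xⁱ‖_w, dᵢₚₖ + ḡ_{p,k}‖x − xⁱ‖_w]), where the sum is the Minkowski sum of sets of reals and u[αᵖ]·S denotes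 the pointwise scaling of the set S. In particular, any trajectory of the unknown system is a trajectory of this data-driven differential inclusion. -/
/-- Weighted norm ‖x‖_w = sqrt (∑ i, (wᵢ xᵢ)²). -/
noncomputable def wnorm {n : ℕ} (w x : Fin n → ℝ) : ℝ :=
  Real.sqrt (∑ i, (w i * x i) ^ 2)

/-- Monomial u[α] = ∏ⱼ uⱼ^{αⱼ}. -/
def monom {m : ℕ} (u : Fin m → ℝ) (α : Fin m → ℕ) : ℝ := ∏ j, u j ^ α j

/-- **Theorem 1, data-driven differential inclusion.** The value of
the unknown vector field `fₖ(x) + ∑ₚ g_{p,k}(x) u[αᵖ]` belongs to the Minkowski sum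
`(⋂ᵢ [aᵢₖ − f̄ₖ‖x−xⁱ‖_w, bᵢₖ + f̄ₖ‖x−xⁱ‖_w]) +
 ∑ₚ u[αᵖ]·(⋂ᵢ [cᵢₚₖ − ḡₚₖ‖x−xⁱ‖_w, dᵢₚₖ + ḡₚₖ‖x−xⁱ‖_w])`,
expressed as the existence of `vf` and `vg p` in the respective intersections with
the value equal to `vf + ∑ₚ u[αᵖ]·(vg p)`. -/
theorem data_driven_differential_inclusion
    (n m d j : ℕ) (w : Fin n → ℝ) (hw : ∀ i, 0 < w i)
    (α : Fin d → Fin m → ℕ)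
    (f : (Fin n → ℝ) → Fin n → ℝ) (g : Fin d → (Fin n → ℝ) → Fin n → ℝ)
    (fbar : Fin n → ℝ) (gbar : Fin d → Fin n → ℝ)
    (hfLip : ∀ (k : Fin n) (x y : Fin n → ℝ), |f x k - f y k| ≤ fbar k * wnorm w (x - y))
    (hgLip : ∀ (p : Fin d) (k : Fin n) (x y : Fin n → ℝ),
      |g p x k - g p y k| ≤ gbar p k * wnorm w (x - y))
    (xd : Fin j → Fin n → ℝ)
    (a b : Fin j → Fin n → ℝ) (c e : Fin j → Fin d → Fin n → ℝ)
    (ha : ∀ (i : Fin j) (k : Fin n), f (xd i) k ∈ Set.Icc (a i k) (b i k))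
    (hc : ∀ (i : Fin j) (p : Fin d) (k : Fin n),
      g p (xd i) k ∈ Set.Icc (c i p k) (e i p k))
    (x : Fin n → ℝ) (u : Fin m → ℝ) (k : Fin n) :
    ∃ vf ∈ ⋂ i : Fin j,
        Set.Icc (a i k - fbar k * wnorm w (x - xd i))
                (b i k + fbar k * wnorm w (x - xd i)),
      ∃ vg : Fin d → ℝ,
        (∀ p : Fin d, vg p ∈ ⋂ i : Fin j,
          Set.Icc (c i p k - gbar p k * wnorm w (x - xd i))
                  (e i p k + gbar p k * wnorm w (x - xd i))) ∧
        f x k + ∑ p, g p x k * monom u (α p) = vf + ∑ p, monom u (α p) * vg p := by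
  refine ⟨f x k, ?_, fun p => g p x k, fun p => ?_, by simp [mul_comm]⟩
  · refine Set.mem_iInter.2 fun i => ?_
    have h1 := hfLip k x (xd i)
    have h2 := abs_le.1 h1
    have h3 := ha i k
    exact ⟨by linarith [h3.1, h2.1], by linarith [h3.2, h2.2]⟩
  · refine Set.mem_iInter.2 fun i => ?_
    have h1 := hgLip p k x (xd i)
    have h2 := abs_le.1 h1
    have h3 := hc i p k
    exact ⟨by linarith [h3.1, h2.1], by linarith [h3.2, h2.2]⟩
end

section
/- Let h : ℝⁿ → ℝⁿ be continuous, let P = [p⁻, p⁺] ⊆ ℝⁿ be a compact box, let H = [H⁻, H⁺] ⊆ ℝⁿ be a box with h(ξ) ∈ H for all ξ ∈ P, and let R ⊆ ℝⁿ. Suppose the fixpoint inclusion R + [0, Δt]·H ⊆ int(P) holds, where R + [0, Δt]·H = {r + s·v : r ∈ R, s ∈ [0, Δt], v ∈ H} and int denotes the interior. Then every solution x : [0, Δt] → ℝⁿ of ẋ(t) = h(x(t)) with x(0) ∈ R satisfies x(t) ∈ P for all t ∈ [0, Δt]; i.e., P is a valid rough enclosure of the trajectory over the time step. -/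
/-! As long as the solution stays in `P` on `[0, t)`, its velocity lies in the box `H`, so the
mean value theorem in each coordinate gives `x t = x 0 + t • v` with `v ∈ H`, and the fixpoint
inclusion puts `x t` in the interior of `P`. Thus the solution can never reach the boundary of `P`
first; continuous induction on `[0, Δt]` makes this precise. -/

open Set Filter

theorem ContinuousOn.mapsTo_Icc_of_mapsTo_Ico_imp_mem_interior {α E : Type*}
    [ConditionallyCompleteLinearOrder α] [TopologicalSpace α] [OrderTopology α]
    [DenselyOrdered α] [TopologicalSpace E] {f : α → E} {S : Set E} {a b : α}
    (hf : ContinuousOn f (Icc a b)) (hS : IsClosed S)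
    (h : ∀ t ∈ Icc a b, MapsTo f (Ico a t) S → f t ∈ interior S) :
    MapsTo f (Icc a b) S := by
  rcases lt_or_ge b a with hba | hab
  · simp only [Icc_eq_empty_of_lt hba, mapsTo_empty]
  have hclosed : IsClosed (f ⁻¹' S ∩ Icc a b) := by
    rw [inter_comm]
    exact hf.preimage_isClosed_of_isClosed isClosed_Icc hS
  refine hclosed.Icc_subset_of_forall_mem_nhdsGT_of_Icc_subset ?_ fun t ht hsub => ?_
  · exact interior_subset (s := S) (h a (left_mem_Icc.2 hab) (by simp only [Ico_self, mapsTo_empty]))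
  have hint : f t ∈ interior S := h t (Ico_subset_Icc_self ht) (Ico_subset_Icc_self.trans hsub)
  have hcont : ContinuousWithinAt f (Ioi t) t :=
    (hf t (Ico_subset_Icc_self ht)).mono_of_mem_nhdsWithin
      (mem_of_superset (Ioo_mem_nhdsGT ht.2) fun s hs => ⟨ht.1.trans hs.1.le, hs.2.le⟩)
  exact mem_of_superset (hcont.preimage_mem_nhdsWithin (isOpen_interior.mem_nhds hint))
    (preimage_mono interior_subset)

theorem slope_mem_Icc_of_hasDerivAt {ι : Type*} {f f' : ℝ → ι → ℝ} {a b : ℝ} {l u : ι → ℝ}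
    (hab : a < b) (hf : ContinuousOn f (Icc a b)) (hf' : ∀ t ∈ Ioo a b, HasDerivAt f (f' t) t)
    (hbound : ∀ t ∈ Ioo a b, f' t ∈ Icc l u) :
    slope f a b ∈ Icc l u := by
  have hcoord : ∀ k, ∃ c ∈ Ioo a b, slope f a b k = f' c k := fun k => by
    obtain ⟨c, hc, hslope⟩ := exists_hasDerivAt_eq_slope (fun t => f t k) (fun t => f' t k) hab
      (continuousOn_pi.1 hf k) fun t ht => hasDerivAt_pi.1 (hf' t ht) k
    refine ⟨c, hc, ?_⟩
    rw [hslope, slope_def_module, Pi.smul_apply, Pi.sub_apply, smul_eq_mul, div_eq_inv_mul]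
  constructor <;> intro k <;> obtain ⟨c, hc, hk⟩ := hcoord k <;> rw [hk]
  exacts [(hbound c hc).1 k, (hbound c hc).2 k]

theorem rough_enclosure_valid_general
    (n : ℕ) (h : (Fin n → ℝ) → (Fin n → ℝ))
    (pl pu Hl Hu : Fin n → ℝ) (hHle : ∀ k, Hl k ≤ Hu k)
    (R : Set (Fin n → ℝ)) (Δt : ℝ)
    (hH : ∀ ξ ∈ Set.Icc pl pu, h ξ ∈ Set.Icc Hl Hu)
    (hfix : ∀ r ∈ R, ∀ s ∈ Set.Icc (0 : ℝ) Δt, ∀ v ∈ Set.Icc Hl Hu,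
      r + s • v ∈ interior (Set.Icc pl pu))
    (x : ℝ → Fin n → ℝ)
    (hx : ∀ t ∈ Set.Icc (0 : ℝ) Δt, HasDerivAt x (h (x t)) t)
    (hx0 : x 0 ∈ R) :
    ∀ t ∈ Set.Icc (0 : ℝ) Δt, x t ∈ Set.Icc pl pu := by
  have hxc : ContinuousOn x (Icc 0 Δt) := fun t ht => (hx t ht).continuousAt.continuousWithinAt
  refine hxc.mapsTo_Icc_of_mapsTo_Ico_imp_mem_interior isClosed_Icc fun t ht hstay => ?_
  rcases ht.1.eq_or_lt with rfl | ht0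
  · simpa using hfix (x 0) hx0 0 ht Hl ⟨le_rfl, hHle⟩
  have hv : slope x 0 t ∈ Icc Hl Hu :=
    slope_mem_Icc_of_hasDerivAt ht0 (hxc.mono (Icc_subset_Icc_right ht.2))
      (fun s hs => hx s ⟨hs.1.le, hs.2.le.trans ht.2⟩)
      (fun s hs => hH _ (hstay ⟨hs.1.le, hs.2⟩))
  rw [← sub_smul_slope_vadd x 0 t, sub_zero, vadd_eq_add, add_comm]
  exact hfix (x 0) hx0 t ht _ hv

/-- **validity of the rough enclosure `𝒫`.** Let `h` be continuous,
`P = [p⁻, p⁺]` a (compact) box, `H = [H⁻, H⁺]` a box with `h(ξ) ∈ H` for all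
`ξ ∈ P`, and `R` a set with the fixpoint inclusion `R + [0, Δt]·H ⊆ int P`.
Then every solution of `ẋ = h(x)` on `[0, Δt]` starting in `R` stays in `P`. -/
theorem rough_enclosure_valid
    (n : ℕ) (h : (Fin n → ℝ) → (Fin n → ℝ)) (hcont : Continuous h)
    (pl pu Hl Hu : Fin n → ℝ) (hHle : ∀ k, Hl k ≤ Hu k)
    (R : Set (Fin n → ℝ)) (Δt : ℝ) (hΔt : 0 ≤ Δt)
    (hH : ∀ ξ ∈ Set.Icc pl pu, h ξ ∈ Set.Icc Hl Hu)
    (hfix : ∀ r ∈ R, ∀ s ∈ Set.Icc (0 : ℝ) Δt, ∀ v ∈ Set.Icc Hl Hu,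
      r + s • v ∈ interior (Set.Icc pl pu))
    (x : ℝ → Fin n → ℝ)
    (hx : ∀ t ∈ Set.Icc (0 : ℝ) Δt, HasDerivAt x (h (x t)) t)
    (hx0 : x 0 ∈ R) :
    ∀ t ∈ Set.Icc (0 : ℝ) Δt, x t ∈ Set.Icc pl pu :=
  rough_enclosure_valid_general n h pl pu Hl Hu hHle R Δt hH hfix x hx hx0
end

section
/- Consider the dynamics ẋ = h(x) := f(x) + Σ_{p=1}^{d} g_p(x)·u[αᵖ] on ℝⁿ with constant control u ∈ ℝᵐ over [0, Δt], where f and each g_p are continuously differentiable, and where for each k, l one has |∂fₖ/∂x_l| ≤ wₖ·f̄ₖ and |∂g_{p,k}/∂x_l| ≤ wₖ·ḡ_{p,k} everywhere. Let P = [p⁻, p⁺] be a box with x(t) ∈ P for all t ∈ [0, Δt], let H = [H⁻, H⁺] be a box with h(ξ) ∈ H for all ξ ∈ P, and let R be a box with x(0) ∈ R. Set cₖ = wₖ·(f̄ₖ + Σ_{p=1}^{d} ḡ_{p,k}·|u[αᵖ]|)·Σ_{l=1}^{n} max(|H⁻_l|, |H⁺_l|). Then for every solution x of the ODE with x(0)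 ∈ R, and for each coordinate k: xₖ(Δt) ∈ Rₖ + Hₖ·Δt + [−cₖ, cₖ]·(Δt²/2), where the sums are Minkowski sums of real intervals. In particular, the box with these componentwise intervals over-approximates the reachable set at time Δt from R. -/
open Set Finset

lemma abs_apply_le_sum_abs_mul {ι : Type*} [Fintype ι] [DecidableEq ι]
    (φ : (ι → ℝ) →L[ℝ] ℝ) (v : ι → ℝ) :
    |φ v| ≤ ∑ l, |v l| * |φ (Pi.single l 1)| := by
  conv_lhs => rw [pi_eq_sum_univ' v, map_sum]
  refine (abs_sum_le_sum_abs _ _).trans_eq (sum_congr rfl fun l _ => ?_)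
  rw [map_smul, smul_eq_mul, abs_mul]

lemma abs_fderiv_add_sum_mul_const_le {E κ : Type*} [NormedAddCommGroup E] [NormedSpace ℝ E]
    [Fintype κ] {φ : E → ℝ} {ψ : κ → E → ℝ} {c : κ → ℝ} {y v : E} {A : ℝ} {B : κ → ℝ}
    (hφ : DifferentiableAt ℝ φ y) (hψ : ∀ p, DifferentiableAt ℝ (ψ p) y)
    (hA : |fderiv ℝ φ y v| ≤ A) (hB : ∀ p, |fderiv ℝ (ψ p) y v| ≤ B p) :
    |fderiv ℝ (fun z => φ z + ∑ p, ψ p z * c p) y v| ≤ A + ∑ p, B p * |c p| := by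
  have hderiv : HasFDerivAt (fun z => φ z + ∑ p, ψ p z * c p)
      (fderiv ℝ φ y + ∑ p, c p • fderiv ℝ (ψ p) y) y :=
    hφ.hasFDerivAt.add (HasFDerivAt.fun_sum fun p _ => (hψ p).hasFDerivAt.mul_const (c p))
  rw [hderiv.fderiv, add_apply, _root_.sum_apply]
  refine (abs_add_le _ _).trans (add_le_add hA ((abs_sum_le_sum_abs _ _).trans ?_))
  refine sum_le_sum fun p _ => ?_
  rw [smul_apply, smul_eq_mul, abs_mul, mul_comm]
  exact mul_le_mul_of_nonneg_right (hB p) (abs_nonneg _)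

/- Bounding `fderiv ℝ φ` in operator norm would use the sup norm of `ι → ℝ` and lose a factor
`card ι`; the enclosure needs the bound `C * ∑ l, M l` from the coordinate expansion. -/
lemma abs_comp_sub_le_of_abs_fderiv_single_le {ι : Type*} [Fintype ι] [DecidableEq ι]
    {φ : (ι → ℝ) → ℝ} {x v : ℝ → ι → ℝ} {T C : ℝ} {M : ι → ℝ}
    (hφ : ∀ t ∈ Icc 0 T, DifferentiableAt ℝ φ (x t))
    (hJ : ∀ t ∈ Icc 0 T, ∀ l, |fderiv ℝ φ (x t) (Pi.single l 1)| ≤ C)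
    (hx : ∀ t ∈ Icc 0 T, HasDerivAt x (v t) t) (hv : ∀ t ∈ Icc 0 T, ∀ l, |v t l| ≤ M l) :
    ∀ t ∈ Icc 0 T, |φ (x t) - φ (x 0)| ≤ C * (∑ l, M l) * t := by
  have hbound : ∀ t ∈ Icc 0 T, |fderiv ℝ φ (x t) (v t)| ≤ C * ∑ l, M l := by
    intro t ht
    refine (abs_apply_le_sum_abs_mul _ _).trans ?_
    rw [mul_sum]
    refine sum_le_sum fun l _ => ?_
    rw [mul_comm C]
    exact mul_le_mul (hv t ht l) (hJ t ht l) (abs_nonneg _)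
      ((abs_nonneg _).trans (hv t ht l))
  intro t ht
  simpa only [Real.norm_eq_abs, sub_zero, Function.comp_apply] using
    norm_image_sub_le_of_norm_deriv_le_segment'
    (fun s hs => ((hφ s hs).hasFDerivAt.comp_hasDerivAt s (hx s hs)).hasDerivWithinAt)
    (fun s hs => hbound s (Ico_subset_Icc_self hs)) t ht

lemma abs_sub_sub_mul_le_of_abs_deriv_sub_le {F F' : ℝ → ℝ} {T K : ℝ} (hT : 0 ≤ T)
    (hF : ∀ t ∈ Icc 0 T, HasDerivAt F (F' t) t) (hF' : ∀ t ∈ Ico 0 T, |F' t - F' 0| ≤ K * t) :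
    |F T - F 0 - F' 0 * T| ≤ K * (T ^ 2 / 2) := by
  have hR : ∀ t ∈ Icc 0 T, HasDerivAt (fun s => F s - F 0 - F' 0 * s) (F' t - F' 0) t :=
    fun t ht => ((hF t ht).sub_const (F 0)).sub (by simpa using (hasDerivAt_id t).const_mul (F' 0))
  have hB : ∀ t, HasDerivAt (fun s => K * (s ^ 2 / 2)) (K * t) t := fun t => by
    simpa using ((hasDerivAt_pow 2 t).div_const 2).const_mul K
  simpa only [Real.norm_eq_abs] using image_norm_le_of_norm_deriv_right_le_deriv_boundary
    (fun t ht => (hR t ht).continuousAt.continuousWithinAt)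
    (fun t ht => (hR t (Ico_subset_Icc_self ht)).hasDerivWithinAt) (by simp) hB
    hF' (right_mem_Icc.2 hT)

lemma exists_mem_Icc_mul_eq_of_abs_le {a C s : ℝ} (hC : 0 ≤ C) (hs : 0 ≤ s) (h : |a| ≤ C * s) :
    ∃ c ∈ Icc (-C) C, a = c * s := by
  rcases hs.eq_or_lt with rfl | hs
  · exact ⟨0, ⟨neg_nonpos.2 hC, hC⟩, by simpa using h⟩
  · refine ⟨a / s, abs_le.1 ?_, (div_mul_cancel₀ a hs.ne').symm⟩
    rwa [abs_div, abs_of_pos hs, div_le_iff₀ hs]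

theorem reachable_set_over_approximation_general
    (n m d : ℕ) (w : Fin n → ℝ)
    (α : Fin d → Fin m → ℕ) (u : Fin m → ℝ)
    (Δt : ℝ) (hΔt : 0 ≤ Δt)
    (f : (Fin n → ℝ) → Fin n → ℝ) (g : Fin d → (Fin n → ℝ) → Fin n → ℝ)
    (hfC : ContDiff ℝ 1 f) (hgC : ∀ p, ContDiff ℝ 1 (g p))
    (fbar : Fin n → ℝ) (gbar : Fin d → Fin n → ℝ)
    (hJf : ∀ (x : Fin n → ℝ) (k l : Fin n),
      |fderiv ℝ (fun y => f y k) x (Pi.single l 1)| ≤ w k * fbar k)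
    (hJg : ∀ (p : Fin d) (x : Fin n → ℝ) (k l : Fin n),
      |fderiv ℝ (fun y => g p y k) x (Pi.single l 1)| ≤ w k * gbar p k)
    (pl pu Hl Hu Rl Ru : Fin n → ℝ)
    (x : ℝ → Fin n → ℝ)
    (hx : ∀ t ∈ Set.Icc (0 : ℝ) Δt,
      HasDerivAt x (fun k => f (x t) k + ∑ p, g p (x t) k * monom u (α p)) t)
    (hP : ∀ t ∈ Set.Icc (0 : ℝ) Δt, x t ∈ Set.Icc pl pu)
    (hH : ∀ ξ ∈ Set.Icc pl pu,
      (fun k => f ξ k + ∑ p, g p ξ k * monom u (α p)) ∈ Set.Icc Hl Hu)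
    (hR : x 0 ∈ Set.Icc Rl Ru) :
    ∀ k : Fin n,
      ∃ r ∈ Set.Icc (Rl k) (Ru k), ∃ hk ∈ Set.Icc (Hl k) (Hu k),
        ∃ ck ∈ Set.Icc
          (-(w k * (fbar k + ∑ p, gbar p k * |monom u (α p)|) *
              ∑ l, max |Hl l| |Hu l|))
          (w k * (fbar k + ∑ p, gbar p k * |monom u (α p)|) *
              ∑ l, max |Hl l| |Hu l|),
          x Δt k = r + hk * Δt + ck * (Δt ^ 2 / 2) := by
  intro k
  set h : (Fin n → ℝ) → Fin n → ℝ := fun y i => f y i + ∑ p, g p y i * monom u (α p)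
  set L := w k * (fbar k + ∑ p, gbar p k * |monom u (α p)|)
  set S := ∑ l, max |Hl l| |Hu l|
  have hfk : Differentiable ℝ (fun y => f y k) :=
    differentiable_pi.1 (hfC.differentiable one_ne_zero) k
  have hgk : ∀ p, Differentiable ℝ (fun y => g p y k) := fun p =>
    differentiable_pi.1 ((hgC p).differentiable one_ne_zero) k
  have hhk : Differentiable ℝ (fun y => h y k) := by fun_prop
  have hJ : ∀ y l, |fderiv ℝ (fun y => h y k) y (Pi.single l 1)| ≤ L := fun y l => by
    convert abs_fderiv_add_sum_mul_const_le (hfk y) (fun p => hgk p y)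
      (hJf y k l) (fun p => hJg p y k l) using 1
    simp only [L, mul_add, mul_sum, mul_assoc]
  have hL : 0 ≤ L := (abs_nonneg _).trans (hJ (x 0) k)
  have hS : 0 ≤ S := sum_nonneg fun l _ => (abs_nonneg _).trans (le_max_left _ _)
  have hHk : ∀ t ∈ Icc 0 Δt, ∀ l, |h (x t) l| ≤ max |Hl l| |Hu l| := fun t ht l =>
    abs_le_max_abs_abs ((hH _ (hP t ht)).1 l) ((hH _ (hP t ht)).2 l)
  have hdrift := abs_comp_sub_le_of_abs_fderiv_single_le (fun t _ => hhk (x t))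
    (fun t _ l => hJ (x t) l) hx hHk
  have hremainder := abs_sub_sub_mul_le_of_abs_deriv_sub_le (K := L * S) hΔt
    (fun t ht => hasDerivAt_pi.1 (hx t ht) k) (fun t ht => hdrift t (Ico_subset_Icc_self ht))
  obtain ⟨ck, hck, hrem⟩ :=
    exists_mem_Icc_mul_eq_of_abs_le (mul_nonneg hL hS) (by positivity) hremainder
  have h0 : (0 : ℝ) ∈ Icc 0 Δt := left_mem_Icc.2 hΔt
  exact ⟨x 0 k, ⟨hR.1 k, hR.2 k⟩, h (x 0) k, ⟨(hH _ (hP 0 h0)).1 k, (hH _ (hP 0 h0)).2 k⟩,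
    ck, hck, by linarith⟩

/-- **Theorem 2, data-driven reachable set over-approximation.**
For the dynamics `ẋ = h(x) = f(x) + ∑ₚ gₚ(x)·u[αᵖ]` with constant control `u`
over `[0, Δt]`, with partial-derivative bounds `|∂fₖ/∂xₗ| ≤ wₖ f̄ₖ` and
`|∂g_{p,k}/∂xₗ| ≤ wₖ ḡ_{p,k}`, a box `P` containing the trajectory, a box `H`
enclosing `h` on `P`, and a box `R` containing `x(0)`, every solution satisfies,
for `cₖ = wₖ (f̄ₖ + ∑ₚ ḡ_{p,k} |u[αᵖ]|) · ∑ₗ max |Hₗ⁻| |Hₗ⁺|`, that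
`xₖ(Δt) ∈ Rₖ + Hₖ·Δt + [−cₖ, cₖ]·(Δt²/2)` componentwise. -/
theorem reachable_set_over_approximation
    (n m d : ℕ) (w : Fin n → ℝ) (hw : ∀ i, 0 < w i)
    (α : Fin d → Fin m → ℕ) (u : Fin m → ℝ)
    (Δt : ℝ) (hΔt : 0 ≤ Δt)
    (f : (Fin n → ℝ) → Fin n → ℝ) (g : Fin d → (Fin n → ℝ) → Fin n → ℝ)
    (hfC : ContDiff ℝ 1 f) (hgC : ∀ p, ContDiff ℝ 1 (g p))
    (fbar : Fin n → ℝ) (gbar : Fin d → Fin n → ℝ)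
    (hJf : ∀ (x : Fin n → ℝ) (k l : Fin n),
      |fderiv ℝ (fun y => f y k) x (Pi.single l 1)| ≤ w k * fbar k)
    (hJg : ∀ (p : Fin d) (x : Fin n → ℝ) (k l : Fin n),
      |fderiv ℝ (fun y => g p y k) x (Pi.single l 1)| ≤ w k * gbar p k)
    (pl pu Hl Hu Rl Ru : Fin n → ℝ)
    (x : ℝ → Fin n → ℝ)
    (hx : ∀ t ∈ Set.Icc (0 : ℝ) Δt,
      HasDerivAt x (fun k => f (x t) k + ∑ p, g p (x t) k * monom u (α p)) t)
    (hP : ∀ t ∈ Set.Icc (0 : ℝ) Δt, x t ∈ Set.Icc pl pu)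
    (hH : ∀ ξ ∈ Set.Icc pl pu,
      (fun k => f ξ k + ∑ p, g p ξ k * monom u (α p)) ∈ Set.Icc Hl Hu)
    (hR : x 0 ∈ Set.Icc Rl Ru) :
    ∀ k : Fin n,
      ∃ r ∈ Set.Icc (Rl k) (Ru k), ∃ hk ∈ Set.Icc (Hl k) (Hu k),
        ∃ ck ∈ Set.Icc
          (-(w k * (fbar k + ∑ p, gbar p k * |monom u (α p)|) *
              ∑ l, max |Hl l| |Hu l|))
          (w k * (fbar k + ∑ p, gbar p k * |monom u (α p)|) *
              ∑ l, max |Hl l| |Hu l|),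
          x Δt k = r + hk * Δt + ck * (Δt ^ 2 / 2) :=
  reachable_set_over_approximation_general n m d w α u Δt hΔt f g hfC hgC fbar gbar hJf hJg pl pu Hl
    Hu Rl Ru x hx hP hH hR
end

section
/- Let c : ℝⁿ × ℝᵐ × ℝⁿ → ℝ be L_c-Lipschitz with respect to the 2-norm, let U be a nonempty set of admissible control sequences (u^j, …, u^{j+N}) ∈ (ℝᵐ)^{N+1}, and for q = j+1, …, j+N+1 let [a^q, b^q] ⊆ ℝⁿ be boxes. Let Φ and Φ̂ assign to every control sequence 𝐮 ∈ U state sequences Φ(𝐮) = (x^j, x^{j+1}, …, x^{j+N+1}) and Φ̂(𝐮) = (x^j, x̂^{j+1}, …, x̂^{j+N+1}) with the same fixed initial state x^j, such that x^q ∈ [a^q, b^q] and x̂^q ∈ [a^q, b^q] for all q = j+1, …, j+N+1 and all 𝐮 ∈ U. Define C* = inf over 𝐮 ∈ U of Σ_{q=j}^{j+N} c(x^q, u^q, x^{q+1}) and Ĉ = inf over 𝐮 ∈ U of Σ_{q=j}^{j+N} c(x^q, u^q, x̂^{q+1}) (states taken from Φ(𝐮) and Φ̂(𝐮) respectively). Then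 |C* − Ĉ| ≤ L_c·(‖b^{j+N+1} − a^{j+N+1}‖₂ + Σ_{q=j+1}^{j+N} 2·‖b^q − a^q‖₂). -/
/-- sqrt of a sum of two squares of nonnegatives is at most the sum. -/
lemma sqrt_sq_add_sq_le' (p r : ℝ) (hp : 0 ≤ p) (hr : 0 ≤ r) :
    Real.sqrt (p ^ 2 + r ^ 2) ≤ p + r := by
  have h : p ^ 2 + r ^ 2 ≤ (p + r) ^ 2 := by nlinarith
  calc Real.sqrt (p ^ 2 + r ^ 2) ≤ Real.sqrt ((p + r) ^ 2) := Real.sqrt_le_sqrt h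
    _ = p + r := Real.sqrt_sq (by linarith)

/-- If two points lie componentwise in the box `[a,b]`, their distance is at most
the norm of the box width. -/
lemma norm_sub_le_of_box {n : ℕ} (x y a b : EuclideanSpace ℝ (Fin n))
    (h : ∀ i, a i ≤ x i ∧ x i ≤ b i ∧ a i ≤ y i ∧ y i ≤ b i) :
    ‖x - y‖ ≤ ‖b - a‖ := by
  rw [EuclideanSpace.norm_eq, EuclideanSpace.norm_eq]
  apply Real.sqrt_le_sqrt
  apply Finset.sum_le_sum
  intro i _
  have hi := h i
  have h1 : |x i - y i| ≤ |b i - a i| := by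
    rw [abs_sub_le_iff]
    constructor
    · rw [le_abs]; left; linarith [hi.1, hi.2.1, hi.2.2.1, hi.2.2.2]
    · rw [le_abs]; left; linarith [hi.1, hi.2.1, hi.2.2.1, hi.2.2.2]
  have hx : ‖(x - y) i‖ = |x i - y i| := by
    simp [Real.norm_eq_abs]
  have hb : ‖(b - a) i‖ = |b i - a i| := by
    simp [Real.norm_eq_abs]
  rw [hx, hb]
  exact pow_le_pow_left₀ (abs_nonneg _) h1 2

/-- The infima of two functions that are pointwise within `B` of each other are
within `B` of each other. -/
lemma abs_sInf_sub_sInf_le {α : Type*} {f g : α → ℝ} {U : Set α} (hU : U.Nonempty)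
    {B : ℝ} (hB : 0 ≤ B) (h : ∀ u ∈ U, |f u - g u| ≤ B) :
    |sInf (f '' U) - sInf (g '' U)| ≤ B := by
  by_cases hbd : BddBelow (f '' U)
  · have hbd' : BddBelow (g '' U) := by
      obtain ⟨L, hL⟩ := hbd
      refine ⟨L - B, ?_⟩
      rintro _ ⟨u, hu, rfl⟩
      have h1 := hL ⟨u, hu, rfl⟩
      have h2 := abs_le.mp (h u hu)
      have := h2.1
      have := h2.2
      linarith
    rw [abs_sub_le_iff]
    constructor
    · have : sInf (f '' U) - B ≤ sInf (g '' U) := by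
        apply le_csInf (hU.image g)
        rintro _ ⟨u, hu, rfl⟩
        have h1 : sInf (f '' U) ≤ f u := csInf_le hbd ⟨u, hu, rfl⟩
        have h2 := abs_le.mp (h u hu)
        linarith [h2.1, h2.2]
      linarith
    · have : sInf (g '' U) - B ≤ sInf (f '' U) := by
        apply le_csInf (hU.image f)
        rintro _ ⟨u, hu, rfl⟩
        have h1 : sInf (g '' U) ≤ g u := csInf_le hbd' ⟨u, hu, rfl⟩
        have h2 := abs_le.mp (h u hu)
        linarith [h2.1, h2.2]
      linarith
  · have hbd' : ¬ BddBelow (g '' U) := by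
      intro hc
      apply hbd
      obtain ⟨L, hL⟩ := hc
      refine ⟨L - B, ?_⟩
      rintro _ ⟨u, hu, rfl⟩
      have h1 := hL ⟨u, hu, rfl⟩
      have h2 := abs_le.mp (h u hu)
      linarith [h2.1, h2.2]
    rw [Real.sInf_of_not_bddBelow hbd, Real.sInf_of_not_bddBelow hbd']
    simpa using hB

/-- **Theorem 3, suboptimality bound.** Let `Φ` give the true state
sequences and `Φ̂` the surrogate ones, both starting at the same known state `x0`
and both contained in the reachable-set over-approximation boxes `[a^q, b^q]` for
`q = j+1, …, j+N+1`, for every admissible control sequence in the nonempty set `U`.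
Then the gap between the optimal true cost `C*` and the optimal surrogate cost `Ĉ`
is at most `L_c (‖b^{j+N+1} − a^{j+N+1}‖₂ + ∑_{q=j+1}^{j+N} 2 ‖b^q − a^q‖₂)`. -/
theorem suboptimality_bound
    (n m N j : ℕ) (Lc : ℝ) (hLc : 0 ≤ Lc)
    (c : EuclideanSpace ℝ (Fin n) × EuclideanSpace ℝ (Fin m) ×
           EuclideanSpace ℝ (Fin n) → ℝ)
    (hc : ∀ (x₁ x₂ : EuclideanSpace ℝ (Fin n)) (u₁ u₂ : EuclideanSpace ℝ (Fin m))
            (z₁ z₂ : EuclideanSpace ℝ (Fin n)),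
      |c (x₁, u₁, z₁) - c (x₂, u₂, z₂)| ≤
        Lc * Real.sqrt (‖x₁ - x₂‖ ^ 2 + ‖u₁ - u₂‖ ^ 2 + ‖z₁ - z₂‖ ^ 2))
    (U : Set (ℕ → EuclideanSpace ℝ (Fin m))) (hU : U.Nonempty)
    (a b : ℕ → EuclideanSpace ℝ (Fin n))
    (x0 : EuclideanSpace ℝ (Fin n))
    (Φ Φhat : (ℕ → EuclideanSpace ℝ (Fin m)) → ℕ → EuclideanSpace ℝ (Fin n))
    (hinit : ∀ uu ∈ U, Φ uu j = x0 ∧ Φhat uu j = x0)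
    (hbox : ∀ uu ∈ U, ∀ q ∈ Finset.Icc (j + 1) (j + N + 1), ∀ i : Fin n,
      a q i ≤ Φ uu q i ∧ Φ uu q i ≤ b q i ∧
      a q i ≤ Φhat uu q i ∧ Φhat uu q i ≤ b q i) :
    |sInf ((fun uu => ∑ q ∈ Finset.Icc j (j + N),
          c (Φ uu q, uu q, Φ uu (q + 1))) '' U) -
      sInf ((fun uu => ∑ q ∈ Finset.Icc j (j + N),
          c (Φhat uu q, uu q, Φhat uu (q + 1))) '' U)| ≤
    Lc * (‖b (j + N + 1) - a (j + N + 1)‖ +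
      ∑ q ∈ Finset.Icc (j + 1) (j + N), 2 * ‖b q - a q‖) := by
  set w : ℕ → ℝ := fun q => ‖b q - a q‖ with hw
  have hBnn : 0 ≤ Lc * (w (j + N + 1) + ∑ q ∈ Finset.Icc (j + 1) (j + N), 2 * w q) := by
    apply mul_nonneg hLc
    apply add_nonneg (norm_nonneg _)
    apply Finset.sum_nonneg
    intro q _
    positivity
  apply abs_sInf_sub_sInf_le hU hBnn
  intro uu huu
  set d : ℕ → ℝ := fun q => ‖Φ uu q - Φhat uu q‖ with hd
  have hdnn : ∀ q, 0 ≤ d q := fun q => norm_nonneg _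
  have hdj : d j = 0 := by
    have := hinit uu huu
    simp [hd, this.1, this.2]
  have hdw : ∀ q ∈ Finset.Icc (j + 1) (j + N + 1), d q ≤ w q := by
    intro q hq
    exact norm_sub_le_of_box _ _ _ _ (hbox uu huu q hq)
  -- termwise bound
  have hterm : ∀ q ∈ Finset.Icc j (j + N),
      |c (Φ uu q, uu q, Φ uu (q + 1)) - c (Φhat uu q, uu q, Φhat uu (q + 1))| ≤
        Lc * (d q + d (q + 1)) := by
    intro q _
    refine le_trans (hc _ _ _ _ _ _) ?_
    apply mul_le_mul_of_nonneg_left _ hLc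
    have : ‖uu q - uu q‖ = 0 := by simp
    rw [this]
    simp only [ne_eq, OfNat.ofNat_ne_zero, not_false_eq_true, zero_pow, add_zero]
    exact sqrt_sq_add_sq_le' _ _ (hdnn q) (hdnn (q + 1))
  -- sum of |term differences| bound
  have hsum1 : |∑ q ∈ Finset.Icc j (j + N), c (Φ uu q, uu q, Φ uu (q + 1)) -
      ∑ q ∈ Finset.Icc j (j + N), c (Φhat uu q, uu q, Φhat uu (q + 1))| ≤
      ∑ q ∈ Finset.Icc j (j + N), Lc * (d q + d (q + 1)) := by
    rw [← Finset.sum_sub_distrib]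
    exact le_trans (Finset.abs_sum_le_sum_abs _ _) (Finset.sum_le_sum hterm)
  refine le_trans hsum1 ?_
  rw [← Finset.mul_sum]
  apply mul_le_mul_of_nonneg_left _ hLc
  -- sum manipulation
  have hNj : j + N + 1 - j = N + 1 := by omega
  have e1 : ∑ q ∈ Finset.Icc j (j + N), (d q + d (q + 1)) =
      ∑ i ∈ Finset.range (N + 1), (d (j + i) + d (j + i + 1)) := by
    rw [← Finset.Ico_add_one_right_eq_Icc, Finset.sum_Ico_eq_sum_range, hNj]
  have hNj2 : j + N + 1 - (j + 1) = N := by omega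
  have e2 : ∑ q ∈ Finset.Icc (j + 1) (j + N), 2 * w q =
      ∑ i ∈ Finset.range N, 2 * w (j + i + 1) := by
    rw [← Finset.Ico_add_one_right_eq_Icc, Finset.sum_Ico_eq_sum_range, hNj2]
    exact Finset.sum_congr rfl (fun i _ => by
      have : j + 1 + i = j + i + 1 := by omega
      rw [this])
  rw [e1, e2]
  rw [Finset.sum_add_distrib, Finset.sum_range_succ' (fun i => d (j + i)) N,
    Finset.sum_range_succ (fun i => d (j + i + 1)) N]
  have hS : ∑ i ∈ Finset.range N, d (j + i + 1) ≤ ∑ i ∈ Finset.range N, w (j + i + 1) := by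
    apply Finset.sum_le_sum
    intro i hi
    apply hdw
    simp only [Finset.mem_range] at hi
    simp only [Finset.mem_Icc]
    omega
  have hlast : d (j + N + 1) ≤ w (j + N + 1) := by
    apply hdw
    simp only [Finset.mem_Icc]
    omega
  have h2 : ∑ i ∈ Finset.range N, 2 * w (j + i + 1) =
      2 * ∑ i ∈ Finset.range N, w (j + i + 1) := by rw [Finset.mul_sum]
  have hj0 : d (j + 0) = 0 := by simpa using hdj
  simp only [hj0, ← Nat.add_assoc]
  linarith [hS, hlast, h2]
end
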